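/- arXiv:2305.11163 — 6 statements merged into one kernel-verified Lean document; each statement's English description precedes it below -/
import Mathlib

section
/- Let m be a natural number, p ∈ (0,1) a real number, and q = 1 − p. If A is a random variable following the binomial distribution Bin(m, p), then E[1/(2 + A)] = 1/((m + 1) p) − (1 − q^(m+2)) / ((m + 1)(m + 2) p²). -/
/-- The probability that a `Bin(m, p)` random variable equals `k`. -/
def binomialPMF (m : ℕ) (p : ℝ) (k : ℕ) : ℝ :=
  (m.choose k : ℝ) * p ^ k * (1 - p) ^ (m - k)

open Finset

lemma sum_choose_pow (n : ℕ) (x y : ℝ) :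
    ∑ j ∈ range (n+1), (n.choose j : ℝ) * x^j * y^(n-j) = (x+y)^n := by
  rw [add_pow]
  exact Finset.sum_congr rfl fun j hj => by ring

lemma sum_j_choose_pow (n : ℕ) (x y : ℝ) :
    ∑ j ∈ range (n+2), (j:ℝ) * ((n+1).choose j : ℝ) * x^j * y^(n+1-j)
      = ((n:ℝ)+1) * x * (x+y)^n := by
  rw [Finset.sum_range_succ']
  have key : ∀ i : ℕ, ((i:ℝ)+1) * ((n+1).choose (i+1) : ℝ) = ((n:ℝ)+1) * (n.choose i : ℝ) := by
    intro i
    have h := Nat.add_one_mul_choose_eq n i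
    have : ((n+1) * n.choose i : ℕ) = ((n+1).choose (i+1) * (i+1) : ℕ) := h
    have := congrArg (Nat.cast (R := ℝ)) this
    push_cast at this
    linarith [this]
  have : ∀ i ∈ range (n+1),
      ((i:ℝ)+1) * ((n+1).choose (i+1) : ℝ) * x^(i+1) * y^(n-i)
        = ((n:ℝ)+1) * x * ((n.choose i : ℝ) * x^i * y^(n-i)) := by
    intro i hi
    have := key i
    calc ((i:ℝ)+1) * ((n+1).choose (i+1) : ℝ) * x^(i+1) * y^(n-i)
        = (((i:ℝ)+1) * ((n+1).choose (i+1) : ℝ)) * (x^(i+1) * y^(n-i)) := by ring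
      _ = (((n:ℝ)+1) * (n.choose i : ℝ)) * (x^(i+1) * y^(n-i)) := by rw [this]
      _ = ((n:ℝ)+1) * x * ((n.choose i : ℝ) * x^i * y^(n-i)) := by ring
  push_cast
  rw [Finset.sum_congr rfl this, ← Finset.mul_sum, sum_choose_pow]
  simp

lemma choose_id (m k : ℕ) :
    (m+1)*(m+2)*m.choose k = (k+1)*(k+2)*(m+2).choose (k+2) := by
  have h1 : (m+1) * m.choose k = (m+1).choose (k+1) * (k+1) := Nat.add_one_mul_choose_eq m k
  have h2 : (m+2) * (m+1).choose (k+1) = (m+2).choose (k+2) * (k+2) :=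
    Nat.add_one_mul_choose_eq (m+1) (k+1)
  calc (m+1)*(m+2)*m.choose k = (m+2)*((m+1)*m.choose k) := by ring
    _ = (m+2)*((m+1).choose (k+1) * (k+1)) := by rw [h1]
    _ = (k+1)*((m+2)*(m+1).choose (k+1)) := by ring
    _ = (k+1)*((m+2).choose (k+2)*(k+2)) := by rw [h2]
    _ = (k+1)*(k+2)*(m+2).choose (k+2) := by ring

lemma key_sum (m : ℕ) (p : ℝ) :
    ∑ k ∈ range (m+1), ((k:ℝ)+1) * ((m+2).choose (k+2) : ℝ) * p^(k+2) * (1-p)^(m-k)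
      = ((m:ℝ)+2)*p - 1 + (1-p)^(m+2) := by
  have hA := sum_j_choose_pow (m+1) p (1-p)
  have hB := sum_choose_pow (m+2) p (1-p)
  simp only [add_sub_cancel, one_pow] at hA hB
  have hC : ∑ j ∈ range (m+3), ((j:ℝ)-1) * ((m+2).choose j : ℝ) * p^j * (1-p)^(m+2-j)
      = ((m:ℝ)+2)*p - 1 := by
    have : ∀ j ∈ range (m+3), ((j:ℝ)-1) * ((m+2).choose j : ℝ) * p^j * (1-p)^(m+2-j)
        = (j:ℝ) * ((m+2).choose j : ℝ) * p^j * (1-p)^(m+2-j)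
          - ((m+2).choose j : ℝ) * p^j * (1-p)^(m+2-j) := by
      intro j hj; ring
    rw [Finset.sum_congr rfl this, Finset.sum_sub_distrib]
    have : (m+3) = (m+1)+2 := by ring
    rw [this] at hA ⊢
    rw [hA]
    have : (m+1)+2 = (m+2)+1 := by ring
    rw [this, hB]
    push_cast
    ring
  rw [Finset.sum_range_succ', Finset.sum_range_succ'] at hC
  push_cast at hC
  have heq : ∑ k ∈ range (m+1), ((k:ℝ)+1) * ((m+2).choose (k+2) : ℝ) * p^(k+2) * (1-p)^(m-k)
      = ∑ x ∈ range (m+1), ((x:ℝ)+1+1-1) * ((m+2).choose (x+1+1) : ℝ) * p^(x+1+1) * (1-p)^(m-x) :=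
    Finset.sum_congr rfl (fun k _ => by norm_num)
  rw [heq]
  simp only [Nat.choose_zero_right, Nat.cast_one, pow_zero] at hC
  linear_combination hC

/-- Chao–Strawderman negative-moment formula with offset `c = 2`:
if `A ~ Bin(m, p)` with `p ∈ (0,1)` and `q = 1 - p`, then
`E[1/(2 + A)] = 1/((m+1) p) - (1 - q^(m+2)) / ((m+1)(m+2) p²)`. -/
theorem chao_strawderman_two (m : ℕ) (p q : ℝ) (hp0 : 0 < p) (hp1 : p < 1)
    (hq : q = 1 - p) :
    ∑ k ∈ Finset.range (m + 1), (1 / (2 + (k : ℝ))) * binomialPMF m p k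
      = 1 / (((m : ℝ) + 1) * p)
        - (1 - q ^ (m + 2)) / (((m : ℝ) + 1) * ((m : ℝ) + 2) * p ^ 2) := by
  subst hq
  have hp : p ≠ 0 := ne_of_gt hp0
  have hterm : ∀ k ∈ Finset.range (m+1), (1/(2+(k:ℝ))) * binomialPMF m p k
      = (((k:ℝ)+1) * ((m+2).choose (k+2):ℝ) * p^(k+2) * (1-p)^(m-k))
        / (((m:ℝ)+1)*((m:ℝ)+2)*p^2) := by
    intro k hk
    have hc := choose_id m k
    have hcR : ((m:ℝ)+1)*((m:ℝ)+2)*(m.choose k:ℝ)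
        = ((k:ℝ)+1)*((k:ℝ)+2)*((m+2).choose (k+2):ℝ) := by exact_mod_cast hc
    unfold binomialPMF
    have h2k : (2:ℝ)+(k:ℝ) ≠ 0 := by positivity
    have hm1 : ((m:ℝ)+1) ≠ 0 := by positivity
    have hm2 : ((m:ℝ)+2) ≠ 0 := by positivity
    field_simp
    linear_combination (p^k * (1-p)^(m-k) * p^2) * hcR
  rw [Finset.sum_congr rfl hterm, ← Finset.sum_div, key_sum]
  have hm1 : ((m:ℝ)+1) ≠ 0 := by positivity
  have hm2 : ((m:ℝ)+2) ≠ 0 := by positivity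
  field_simp
  ring
end

section
/- Let n ≥ 1 be a natural number, p ∈ (0,1), q = 1 − p, and μ₁, μ₀, σ₁², σ₀² real numbers with σ₁², σ₀² ≥ 0. Let (Ω, 𝔉, μ) be a probability space, A : Ω → ℕ a random variable following the binomial distribution Bin(n, p), and set N = n + 2, N₁ = 1 + A, N₀ = n + 1 − A. Let T be a square-integrable real random variable such that almost surely E[T ∣ σ(A)] = (N₁/(N p)) μ₁ − (N₀/(N q)) μ₀ and E[(T − E[T ∣ σ(A)])² ∣ σ(A)] = N₁ σ₁²/(N p)² + N₀ σ₀²/(N q)². Then Var(T) = (μ₁/p + μ₀/q)² · n p q/(n + 2)² + σ₁² (n p + 1)/((n + 2)² p²) + σ₀² (n q + 1)/((n + 2)² q²). -/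
/-!
By the law of total variance, `Var T = E[Var(T | A)] + Var(E[T | A])`. Both conditional moments
are affine in `A`, so only `E[A] = n p` and `Var A = n p q` enter; these are the Bernstein-polynomial
identities `∑ k b_{n,k}(p) = n p` and `∑ (n p - k)² b_{n,k}(p) = n p (1 - p)`.
-/

open MeasureTheory ProbabilityTheory

open scoped unitInterval

namespace ProbabilityTheory

variable {Ω : Type*} {mΩ : MeasurableSpace Ω} {P : Measure Ω} {n : ℕ} {p : I}

lemma integral_map_cast_binomial_eq_sum_bernstein (f : ℝ → ℝ) :
    ∫ x, f x ∂Bin(ℝ, n, p) =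
      ∑ k ∈ Finset.range (n + 1), f k * (bernsteinPolynomial ℝ n k).eval (p : ℝ) := by
  rw [integral_map_cast_binomial, Nat.range_succ_eq_Iic]
  refine Finset.sum_congr rfl fun k _ ↦ ?_
  simp [bernsteinPolynomial, mul_comm]

lemma integral_of_hasLaw_binomial {X : Ω → ℝ} (hX : HasLaw X Bin(ℝ, n, p) P) :
    P[X] = (p : ℝ) * n := by
  have h := congrArg (Polynomial.eval (p : ℝ)) (bernsteinPolynomial.sum_smul (R := ℝ) n)
  simp only [Polynomial.eval_finsetSum, nsmul_eq_mul, Polynomial.eval_mul,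
    Polynomial.eval_natCast, Polynomial.eval_X] at h
  rw [hX.integral_eq, integral_map_cast_binomial_eq_sum_bernstein (fun x ↦ x), h, mul_comm]

lemma variance_of_hasLaw_binomial {X : Ω → ℝ} (hX : HasLaw X Bin(ℝ, n, p) P) :
    Var[X; P] = (p : ℝ) * (1 - p) * n := by
  have h := congrArg (Polynomial.eval (p : ℝ)) (bernsteinPolynomial.variance (R := ℝ) n)
  simp only [Polynomial.eval_finsetSum, Polynomial.eval_mul, Polynomial.eval_pow,
    Polynomial.eval_sub, Polynomial.eval_natCast, Polynomial.eval_one,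
    nsmul_eq_mul, Polynomial.eval_X] at h
  rw [hX.variance_eq, variance_eq_integral aemeasurable_id,
    integral_of_hasLaw_binomial HasLaw.id,
    integral_map_cast_binomial_eq_sum_bernstein (fun x ↦ (id x - p * n) ^ 2)]
  trans ∑ k ∈ Finset.range (n + 1), (n * p - k) ^ 2 * (bernsteinPolynomial ℝ n k).eval (p : ℝ)
  · exact Finset.sum_congr rfl fun k _ ↦ by simp only [id]; ring
  · rw [h]; ring

lemma integrable_of_hasLaw_binomial {X : Ω → ℝ} (hX : HasLaw X Bin(ℝ, n, p) P) :
    Integrable X P := by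
  have := (integrable_map_measure aestronglyMeasurable_id hX.aemeasurable).1
  rw [hX.map_eq] at this
  exact this (integrable_map_cast_binomial id)

lemma hasLaw_binomial_of_measure_eq {A : Ω → ℕ} (hA : Measurable A) (hAle : ∀ ω, A ω ≤ n)
    (h : ∀ k ≤ n, P {ω | A ω = k} = ENNReal.ofReal (n.choose k * p ^ k * (1 - p) ^ (n - k))) :
    HasLaw A Bin(n, p) P where
  map_eq := by
    refine Measure.ext_of_singleton fun k ↦ ?_
    rw [Measure.map_apply hA (measurableSet_singleton k), binomial_singleton]
    rcases le_or_gt k n with hk | hk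
    · exact h k hk
    · simp [Nat.choose_eq_zero_of_lt hk, Set.preimage, fun ω ↦ ((hAle ω).trans_lt hk).ne]

lemma variance_eq_of_affine_condExp_condVar {m m₀ : MeasurableSpace Ω} {μ : Measure[m₀] Ω}
    [IsProbabilityMeasure μ] (hm : m ≤ m₀) {T X : Ω → ℝ} (hT : MemLp T 2 μ)
    (hX : Integrable X μ) {a b c d : ℝ} (hmean : μ[T | m] =ᵐ[μ] fun ω ↦ a + b * X ω)
    (hvar : Var[T; μ | m] =ᵐ[μ] fun ω ↦ c + d * X ω) :
    Var[T; μ] = c + d * μ[X] + b ^ 2 * Var[X; μ] := by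
  rw [← integral_condVar_add_variance_condExp hm hT, integral_congr_ae hvar,
    variance_congr hmean, variance_const_add (hX.aestronglyMeasurable.const_mul b),
    variance_const_mul, integral_add (integrable_const c) (hX.const_mul d), integral_const_mul]
  simp

end ProbabilityTheory

theorem variance_true_ps_ipw_general (n : ℕ) (p q : ℝ)
    (hp0 : 0 < p) (hp1 : p < 1) (hq : q = 1 - p)
    (μ₁ μ₀ σ₁sq σ₀sq : ℝ)
    (Ω : Type*) [MeasurableSpace Ω] (μ : Measure Ω) [IsProbabilityMeasure μ]
    (A : Ω → ℕ) (hA : Measurable A) (hAle : ∀ ω, A ω ≤ n)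
    (hAdist : ∀ k ≤ n, μ {ω | A ω = k}
      = ENNReal.ofReal ((n.choose k : ℝ) * p ^ k * (1 - p) ^ (n - k)))
    (T : Ω → ℝ) (hT : MemLp T 2 μ)
    (hcondmean : ∀ᵐ ω ∂μ,
      (μ[T | MeasurableSpace.comap A ⊤]) ω
        = ((1 + (A ω : ℝ)) / (((n : ℝ) + 2) * p)) * μ₁
          - (((n : ℝ) + 1 - (A ω : ℝ)) / (((n : ℝ) + 2) * q)) * μ₀)
    (hcondvar : ∀ᵐ ω ∂μ,
      (μ[(fun ω' => (T ω' - (μ[T | MeasurableSpace.comap A ⊤]) ω') ^ 2) |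
          MeasurableSpace.comap A ⊤]) ω
        = (1 + (A ω : ℝ)) * σ₁sq / ((((n : ℝ) + 2) * p) ^ 2)
          + ((n : ℝ) + 1 - (A ω : ℝ)) * σ₀sq / ((((n : ℝ) + 2) * q) ^ 2)) :
    variance T μ
      = (μ₁ / p + μ₀ / q) ^ 2 * ((n : ℝ) * p * q) / ((n : ℝ) + 2) ^ 2
        + σ₁sq * ((n : ℝ) * p + 1) / (((n : ℝ) + 2) ^ 2 * p ^ 2)
        + σ₀sq * ((n : ℝ) * q + 1) / (((n : ℝ) + 2) ^ 2 * q ^ 2) := by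
  set N : ℝ := n + 2
  let p' : I := ⟨p, hp0.le, hp1.le⟩
  have hq0 : q ≠ 0 := by rw [hq]; linarith
  have hN : N ≠ 0 := by positivity
  -- keeps `N` atomic for `ring`, which cannot split the inverse of `(n + 2) * p`
  clear_value N
  have hlaw : HasLaw (fun ω ↦ (A ω : ℝ)) Bin(ℝ, n, p') μ :=
    HasLaw.comp ⟨measurable_from_nat.aemeasurable, rfl⟩
      (hasLaw_binomial_of_measure_eq hA hAle hAdist)
  have hmean : μ[T | MeasurableSpace.comap A ⊤] =ᵐ[μ] fun ω ↦
      (μ₁ / (N * p) - ((n : ℝ) + 1) * μ₀ / (N * q)) + (μ₁ / p + μ₀ / q) / N * A ω := by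
    filter_upwards [hcondmean] with ω h
    rw [h]; ring
  have hvar : Var[T; μ | MeasurableSpace.comap A ⊤] =ᵐ[μ] fun ω ↦
      (σ₁sq / (N * p) ^ 2 + ((n : ℝ) + 1) * σ₀sq / (N * q) ^ 2)
        + (σ₁sq / (N * p) ^ 2 - σ₀sq / (N * q) ^ 2) * A ω := by
    filter_upwards [hcondvar] with ω h
    exact h.trans (by ring)
  rw [variance_eq_of_affine_condExp_condVar hA.comap_le hT
      (integrable_of_hasLaw_binomial hlaw) hmean hvar,
    integral_of_hasLaw_binomial hlaw, variance_of_hasLaw_binomial hlaw,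
    show (p' : ℝ) = p from rfl]
  subst hq
  field_simp
  ring

/-- Law-of-total-variance decomposition for the true-propensity-score IPW stratum
estimator.  Let `A ~ Bin(n, p)` on a probability space `(Ω, 𝔉, μ)`, and let
`N = n + 2`, `N₁ = 1 + A`, `N₀ = n + 1 - A`.  If `T` is square-integrable with
a.s. conditional mean `(N₁/(N p)) μ₁ - (N₀/(N q)) μ₀` and a.s. conditional variance
`N₁ σ₁²/(N p)² + N₀ σ₀²/(N q)²` given `σ(A)`, then
`Var(T) = (μ₁/p + μ₀/q)² n p q/(n+2)² + σ₁² (n p + 1)/((n+2)² p²)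
  + σ₀² (n q + 1)/((n+2)² q²)`. -/
theorem variance_true_ps_ipw (n : ℕ) (hn : 1 ≤ n) (p q : ℝ)
    (hp0 : 0 < p) (hp1 : p < 1) (hq : q = 1 - p)
    (μ₁ μ₀ σ₁sq σ₀sq : ℝ) (hσ₁ : 0 ≤ σ₁sq) (hσ₀ : 0 ≤ σ₀sq)
    (Ω : Type*) [MeasurableSpace Ω] (μ : Measure Ω) [IsProbabilityMeasure μ]
    (A : Ω → ℕ) (hA : Measurable A) (hAle : ∀ ω, A ω ≤ n)
    (hAdist : ∀ k ≤ n, μ {ω | A ω = k}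
      = ENNReal.ofReal ((n.choose k : ℝ) * p ^ k * (1 - p) ^ (n - k)))
    (T : Ω → ℝ) (hT : MemLp T 2 μ)
    (hcondmean : ∀ᵐ ω ∂μ,
      (μ[T | MeasurableSpace.comap A ⊤]) ω
        = ((1 + (A ω : ℝ)) / (((n : ℝ) + 2) * p)) * μ₁
          - (((n : ℝ) + 1 - (A ω : ℝ)) / (((n : ℝ) + 2) * q)) * μ₀)
    (hcondvar : ∀ᵐ ω ∂μ,
      (μ[(fun ω' => (T ω' - (μ[T | MeasurableSpace.comap A ⊤]) ω') ^ 2) |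
          MeasurableSpace.comap A ⊤]) ω
        = (1 + (A ω : ℝ)) * σ₁sq / ((((n : ℝ) + 2) * p) ^ 2)
          + ((n : ℝ) + 1 - (A ω : ℝ)) * σ₀sq / ((((n : ℝ) + 2) * q) ^ 2)) :
    variance T μ
      = (μ₁ / p + μ₀ / q) ^ 2 * ((n : ℝ) * p * q) / ((n : ℝ) + 2) ^ 2
        + σ₁sq * ((n : ℝ) * p + 1) / (((n : ℝ) + 2) ^ 2 * p ^ 2)
        + σ₀sq * ((n : ℝ) * q + 1) / (((n : ℝ) + 2) ^ 2 * q ^ 2) :=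
  variance_true_ps_ipw_general n p q hp0 hp1 hq μ₁ μ₀ σ₁sq σ₀sq Ω μ A hA hAle hAdist T hT hcondmean
    hcondvar
end

section
/- Let n ≥ 1 be a natural number, p ∈ (0,1), q = 1 − p, and μ₁, μ₀, σ₁², σ₀² real numbers with σ₁², σ₀² ≥ 0. Let (Ω, 𝔉, μ) be a probability space, A : Ω → ℕ a random variable following the binomial distribution Bin(n, p), and set N₁ = 1 + A, N₀ = n + 1 − A. Let T be a square-integrable real random variable such that almost surely E[T ∣ σ(A)] = μ₁ − μ₀ and E[(T − E[T ∣ σ(A)])² ∣ σ(A)] = σ₁²/N₁ + σ₀²/N₀. Then Var(T) = σ₁² (1 − q^(n+1)) / ((n + 1) p) + σ₀² (1 − p^(n+1)) / ((n + 1) q). -/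
/-!
The conditional mean of `T` given `A` is constant, so by the law of total variance `Var T` is the
mean of the conditional variance, `E[σ₁² / (1 + A) + σ₀² / (n + 1 - A)]`. The inverse moments
of the binomial law are computed by absorbing the denominator into the binomial coefficient,
`(n + 1) C(n, k) = (k + 1) C(n + 1, k + 1)`, which turns the sum into the binomial expansion of
`(p + q) ^ (n + 1) = 1` minus its `k = 0` term.
-/

open MeasureTheory ProbabilityTheory Finset

section BinomialSums

variable {K : Type*} [Field K] [CharZero K]

theorem sum_choose_mul_pow_div_add_one (n : ℕ) (x y : K) :
    (∑ k ∈ range (n + 1), n.choose k * x ^ k * y ^ (n - k) / (k + 1)) * ((n + 1) * x)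
      = (x + y) ^ (n + 1) - y ^ (n + 1) := by
  have hterm : ∀ k ∈ range (n + 1), n.choose k * x ^ k * y ^ (n - k) / (k + 1) * ((n + 1) * x)
      = x ^ (k + 1) * y ^ (n + 1 - (k + 1)) * (n + 1).choose (k + 1) := by
    intro k _
    have hchoose : ((n + 1 : ℕ) * n.choose k : K) = (n + 1).choose (k + 1) * (k + 1) := by
      exact_mod_cast Nat.add_one_mul_choose_eq n k
    rw [Nat.add_sub_add_right]
    push_cast at hchoose
    field_simp
    linear_combination x ^ (k + 1) * y ^ (n - k) * hchoose
  rw [sum_mul, sum_congr rfl hterm, add_pow, sum_range_succ' _ (n + 1)]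
  simp

theorem sum_choose_mul_pow_div_sub (n : ℕ) (x y : K) :
    (∑ k ∈ range (n + 1), n.choose k * x ^ k * y ^ (n - k) / (n + 1 - k)) * ((n + 1) * y)
      = (x + y) ^ (n + 1) - x ^ (n + 1) := by
  rw [add_comm x, ← sum_choose_mul_pow_div_add_one, ← sum_range_reflect]
  congr 1
  refine sum_congr rfl fun k hk => ?_
  have hkn : k ≤ n := Nat.lt_succ_iff.mp (mem_range.mp hk)
  rw [Nat.add_sub_cancel, Nat.choose_symm hkn, Nat.sub_sub_self hkn, Nat.cast_sub hkn]
  ring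

end BinomialSums

theorem integral_comp_eq_sum_measureReal_preimage {Ω α E : Type*} [MeasurableSpace Ω]
    [MeasurableSpace α] [MeasurableSingletonClass α] [NormedAddCommGroup E] [NormedSpace ℝ E]
    [CompleteSpace E] {μ : Measure Ω} [IsFiniteMeasure μ] {A : Ω → α} (hA : Measurable A)
    {s : Finset α} (hAs : ∀ ω, A ω ∈ s) (g : α → E) :
    ∫ ω, g (A ω) ∂μ = ∑ a ∈ s, μ.real (A ⁻¹' {a}) • g a := by
  have hfibre : ∀ ω, g (A ω) = ∑ a ∈ s, (A ⁻¹' {a}).indicator (fun _ => g a) ω := by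
    intro ω
    rw [sum_eq_single_of_mem (A ω) (hAs ω)]
    · simp
    · intro a _ ha
      simp [Ne.symm ha]
  simp_rw [hfibre]
  have hfibre_meas (a : α) : MeasurableSet (A ⁻¹' {a}) := hA (measurableSet_singleton a)
  rw [integral_finsetSum _ fun a _ => (integrable_const _).indicator (hfibre_meas a)]
  exact sum_congr rfl fun a _ => integral_indicator_const _ (hfibre_meas a)

theorem integral_comp_of_binomial {Ω : Type*} [MeasurableSpace Ω] {μ : Measure Ω}
    [IsFiniteMeasure μ] {n : ℕ} {p : ℝ} (hp0 : 0 ≤ p) (hp1 : p ≤ 1) {A : Ω → ℕ}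
    (hA : Measurable A) (hAle : ∀ ω, A ω ≤ n)
    (hAdist : ∀ k ≤ n, μ {ω | A ω = k}
      = ENNReal.ofReal ((n.choose k : ℝ) * p ^ k * (1 - p) ^ (n - k))) (g : ℕ → ℝ) :
    ∫ ω, g (A ω) ∂μ
      = ∑ k ∈ range (n + 1), n.choose k * p ^ k * (1 - p) ^ (n - k) * g k := by
  rw [integral_comp_eq_sum_measureReal_preimage hA (s := range (n + 1))
    fun ω => mem_range.mpr (Nat.lt_succ_of_le (hAle ω))]
  refine sum_congr rfl fun k hk => ?_
  simp only [measureReal_def, Set.preimage, Set.mem_singleton_iff]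
  rw [hAdist k (Nat.lt_succ_iff.mp (mem_range.mp hk)), ENNReal.toReal_ofReal (by positivity),
    smul_eq_mul]

theorem variance_eq_integral_condVar_of_condExp_ae_eq_const {Ω : Type*}
    {m m₀ : MeasurableSpace Ω} {μ : Measure[m₀] Ω} [IsProbabilityMeasure μ] (hm : m ≤ m₀)
    {X : Ω → ℝ} (hX : MemLp X 2 μ)
    {c : ℝ} (hc : μ[X | m] =ᵐ[μ] fun _ => c) :
    Var[X; μ] = μ[Var[X; μ | m]] := by
  have hconst : Var[μ[X | m]; μ] = 0 := by
    rw [variance_congr hc, variance_eq_integral aemeasurable_const]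
    simp
  rw [← integral_condVar_add_variance_condExp hm hX, hconst, add_zero]

theorem variance_estimated_ps_ipw_general (n : ℕ) (p q : ℝ)
    (hp0 : 0 < p) (hp1 : p < 1) (hq : q = 1 - p)
    (μ₁ μ₀ σ₁sq σ₀sq : ℝ)
    (Ω : Type*) [MeasurableSpace Ω] (μ : Measure Ω) [IsProbabilityMeasure μ]
    (A : Ω → ℕ) (hA : Measurable A) (hAle : ∀ ω, A ω ≤ n)
    (hAdist : ∀ k ≤ n, μ {ω | A ω = k}
      = ENNReal.ofReal ((n.choose k : ℝ) * p ^ k * (1 - p) ^ (n - k)))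
    (T : Ω → ℝ) (hT : MemLp T 2 μ)
    (hcondmean : ∀ᵐ ω ∂μ,
      (μ[T | MeasurableSpace.comap A ⊤]) ω = μ₁ - μ₀)
    (hcondvar : ∀ᵐ ω ∂μ,
      (μ[(fun ω' => (T ω' - (μ[T | MeasurableSpace.comap A ⊤]) ω') ^ 2) |
          MeasurableSpace.comap A ⊤]) ω
        = σ₁sq / (1 + (A ω : ℝ)) + σ₀sq / ((n : ℝ) + 1 - (A ω : ℝ))) :
    variance T μ
      = σ₁sq * (1 - q ^ (n + 1)) / (((n : ℝ) + 1) * p)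
        + σ₀sq * (1 - p ^ (n + 1)) / (((n : ℝ) + 1) * q) := by
  subst hq
  have hq0 : (1 - p) ≠ 0 := sub_ne_zero.mpr hp1.ne'
  have hS₁ := sum_choose_mul_pow_div_add_one n p (1 - p)
  have hS₀ := sum_choose_mul_pow_div_sub n p (1 - p)
  rw [add_sub_cancel, one_pow] at hS₁ hS₀
  calc variance T μ
      = ∫ ω, σ₁sq / (1 + (A ω : ℝ)) + σ₀sq / ((n : ℝ) + 1 - (A ω : ℝ)) ∂μ := by
        rw [variance_eq_integral_condVar_of_condExp_ae_eq_const hA.comap_le hT hcondmean]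
        exact integral_congr_ae hcondvar
    _ = σ₁sq * ∑ k ∈ range (n + 1), n.choose k * p ^ k * (1 - p) ^ (n - k) / (k + 1)
        + σ₀sq * ∑ k ∈ range (n + 1),
            n.choose k * p ^ k * (1 - p) ^ (n - k) / (n + 1 - k) := by
        rw [integral_comp_of_binomial hp0.le hp1.le hA hAle hAdist
          fun k => σ₁sq / (1 + (k : ℝ)) + σ₀sq / ((n : ℝ) + 1 - k), mul_sum, mul_sum,
          ← sum_add_distrib]
        exact sum_congr rfl fun k _ => by ring
    _ = _ := by
        rw [eq_div_of_mul_eq (by positivity) hS₁, eq_div_of_mul_eq (by positivity) hS₀]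
        ring

/-- Law-of-total-variance computation for the estimated-propensity-score IPW stratum
estimator.  Let `A ~ Bin(n, p)` on a probability space `(Ω, 𝔉, μ)`, and let
`N₁ = 1 + A`, `N₀ = n + 1 - A`.  If `T` is square-integrable with a.s. conditional
mean `μ₁ - μ₀` and a.s. conditional variance `σ₁²/N₁ + σ₀²/N₀` given `σ(A)`, then
`Var(T) = σ₁² (1 - q^(n+1))/((n+1) p) + σ₀² (1 - p^(n+1))/((n+1) q)`. -/
theorem variance_estimated_ps_ipw (n : ℕ) (hn : 1 ≤ n) (p q : ℝ)
    (hp0 : 0 < p) (hp1 : p < 1) (hq : q = 1 - p)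
    (μ₁ μ₀ σ₁sq σ₀sq : ℝ) (hσ₁ : 0 ≤ σ₁sq) (hσ₀ : 0 ≤ σ₀sq)
    (Ω : Type*) [MeasurableSpace Ω] (μ : Measure Ω) [IsProbabilityMeasure μ]
    (A : Ω → ℕ) (hA : Measurable A) (hAle : ∀ ω, A ω ≤ n)
    (hAdist : ∀ k ≤ n, μ {ω | A ω = k}
      = ENNReal.ofReal ((n.choose k : ℝ) * p ^ k * (1 - p) ^ (n - k)))
    (T : Ω → ℝ) (hT : MemLp T 2 μ)
    (hcondmean : ∀ᵐ ω ∂μ,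
      (μ[T | MeasurableSpace.comap A ⊤]) ω = μ₁ - μ₀)
    (hcondvar : ∀ᵐ ω ∂μ,
      (μ[(fun ω' => (T ω' - (μ[T | MeasurableSpace.comap A ⊤]) ω') ^ 2) |
          MeasurableSpace.comap A ⊤]) ω
        = σ₁sq / (1 + (A ω : ℝ)) + σ₀sq / ((n : ℝ) + 1 - (A ω : ℝ))) :
    variance T μ
      = σ₁sq * (1 - q ^ (n + 1)) / (((n : ℝ) + 1) * p)
        + σ₀sq * (1 - p ^ (n + 1)) / (((n : ℝ) + 1) * q) :=
  variance_estimated_ps_ipw_general n p q hp0 hp1 hq μ₁ μ₀ σ₁sq σ₀sq Ω μ A hA hAle hAdist T hT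
    hcondmean hcondvar
end

section
/- Let I be a nonempty finite index set, 𝒳 a finite set, and let Y : I → ℝ, Z : I → {0,1}, X : I → 𝒳, and w : 𝒳 → ℝ with 0 < w(x) < 1 for all x. Write N = |I|, and for each x ∈ 𝒳 let I_x = {i ∈ I : X(i) = x}, N_x = |I_x|, N_{x,1} = |{i ∈ I_x : Z(i) = 1}|, N_{x,0} = |{i ∈ I_x : Z(i) = 0}|, p̂(x) = N_{x,1}/N_x, Ȳ_{x,1} = (Σ_{i ∈ I_x, Z(i)=1} Y(i))/N_{x,1}, and Ȳ_{x,0} = (Σ_{i ∈ I_x, Z(i)=0} Y(i))/N_{x,0}. Assume N_{x,1} > 0 and N_{x,0} > 0 for every x ∈ 𝒳 with N_x > 0. Then (1/N) Σ_{i ∈ I} [ Y(i) Z(i)/w(X(i)) − Y(i)(1 − Z(i))/(1 − w(X(i))) ] = Σ_{x ∈ 𝒳, N_x > 0} (N_x/N) [ (p̂(x)/w(x)) Ȳ_{x,1} − ((1 − p̂(x))/(1 − w(x))) Ȳ_{x,0} ]. -/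
open Finset

/-- The IPW estimator with weight function `w` over a finite dataset
`(Y i, Z i, X i)` equals the weighted sum over nonempty covariate strata of the
stratum-level contrasts `(p̂(x)/w(x)) Ȳ_{x,1} - ((1-p̂(x))/(1-w(x))) Ȳ_{x,0}`. -/
theorem ipw_is_stratification (I : Type*) [Fintype I] [Nonempty I] [DecidableEq I]
    (𝒳 : Type*) [Fintype 𝒳] [DecidableEq 𝒳]
    (Y : I → ℝ) (Z : I → ℕ) (hZ : ∀ i, Z i = 0 ∨ Z i = 1)
    (X : I → 𝒳) (w : 𝒳 → ℝ) (hw : ∀ x, 0 < w x ∧ w x < 1)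
    (hstrata : ∀ x : 𝒳, 0 < ({i : I | X i = x} : Finset I).card →
      0 < ({i : I | X i = x ∧ Z i = 1} : Finset I).card ∧
      0 < ({i : I | X i = x ∧ Z i = 0} : Finset I).card) :
    (1 / (Fintype.card I : ℝ)) *
        ∑ i : I, (Y i * (Z i : ℝ) / w (X i) - Y i * (1 - (Z i : ℝ)) / (1 - w (X i)))
      = ∑ x ∈ ({x : 𝒳 | 0 < ({i : I | X i = x} : Finset I).card} : Finset 𝒳),
          ((({i : I | X i = x} : Finset I).card : ℝ) / (Fintype.card I : ℝ)) *
          (((({i : I | X i = x ∧ Z i = 1} : Finset I).card : ℝ)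
                / (({i : I | X i = x} : Finset I).card : ℝ)) / w x
              * ((∑ i ∈ ({i : I | X i = x ∧ Z i = 1} : Finset I), Y i)
                / (({i : I | X i = x ∧ Z i = 1} : Finset I).card : ℝ))
            - ((1 - (({i : I | X i = x ∧ Z i = 1} : Finset I).card : ℝ)
                / (({i : I | X i = x} : Finset I).card : ℝ)) / (1 - w x))
              * ((∑ i ∈ ({i : I | X i = x ∧ Z i = 0} : Finset I), Y i)
                / (({i : I | X i = x ∧ Z i = 0} : Finset I).card : ℝ))) := by
  classical
  have hNpos : (0:ℝ) < (Fintype.card I : ℝ) := by exact_mod_cast Fintype.card_pos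
  have e1 : ∀ x : 𝒳, Finset.filter (fun i => Z i = 1) ({i : I | X i = x} : Finset I)
      = ({i : I | X i = x ∧ Z i = 1} : Finset I) := by
    intro x
    show Finset.filter _ (Finset.univ.filter _) = Finset.univ.filter _
    rw [Finset.filter_filter]
  have e0 : ∀ x : 𝒳, Finset.filter (fun i => ¬ Z i = 1) ({i : I | X i = x} : Finset I)
      = ({i : I | X i = x ∧ Z i = 0} : Finset I) := by
    intro x
    ext i
    simp only [Finset.mem_filter, Finset.mem_univ, true_and, Set.mem_setOf_eq]
    constructor
    · rintro ⟨h1, h2⟩; exact ⟨h1, by rcases hZ i with h|h <;> omega⟩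
    · rintro ⟨h1, h2⟩; exact ⟨h1, by omega⟩
  have key : ∀ x : 𝒳, ∀ i ∈ ({i : I | X i = x} : Finset I),
      (Y i * (Z i : ℝ) / w (X i) - Y i * (1 - (Z i : ℝ)) / (1 - w (X i)))
        = (if Z i = 1 then Y i / w x else -(Y i / (1 - w x))) := by
    intro x i hi
    simp only [Finset.mem_filter, Finset.mem_univ, true_and, Set.mem_setOf_eq] at hi
    rcases hZ i with h0 | h1
    · rw [h0, if_neg (by omega : ¬ (0:ℕ) = 1), hi]
      push_cast
      ring
    · rw [h1, if_pos rfl, hi]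
      push_cast
      ring
  have split : ∀ x : 𝒳,
      ∑ i ∈ ({i : I | X i = x} : Finset I),
        (Y i * (Z i : ℝ) / w (X i) - Y i * (1 - (Z i : ℝ)) / (1 - w (X i)))
      = (∑ i ∈ ({i : I | X i = x ∧ Z i = 1} : Finset I), Y i) / w x
        - (∑ i ∈ ({i : I | X i = x ∧ Z i = 0} : Finset I), Y i) / (1 - w x) := by
    intro x
    rw [Finset.sum_congr rfl (key x), Finset.sum_ite, e1, e0, ← Finset.sum_div,
      Finset.sum_neg_distrib, ← Finset.sum_div]
    ring
  have cardsplit : ∀ x : 𝒳,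
      ({i : I | X i = x} : Finset I).card
        = ({i : I | X i = x ∧ Z i = 1} : Finset I).card
          + ({i : I | X i = x ∧ Z i = 0} : Finset I).card := by
    intro x
    rw [← e1 x, ← e0 x]
    exact (Finset.card_filter_add_card_filter_not (p := fun i => Z i = 1)).symm
  have fib : ∑ i : I, (Y i * (Z i : ℝ) / w (X i) - Y i * (1 - (Z i : ℝ)) / (1 - w (X i)))
      = ∑ x : 𝒳, ∑ i ∈ ({i : I | X i = x} : Finset I),
          (Y i * (Z i : ℝ) / w (X i) - Y i * (1 - (Z i : ℝ)) / (1 - w (X i))) :=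
    (Finset.sum_fiberwise Finset.univ X _).symm
  rw [fib, Finset.mul_sum]
  rw [← Finset.sum_subset (Finset.filter_subset _ Finset.univ)
    (by
      intro x _ hx
      have : ({i : I | X i = x} : Finset I) = ∅ := by
        rw [← Finset.card_eq_zero]
        by_contra h
        exact hx (Finset.mem_filter.mpr ⟨Finset.mem_univ x, Nat.pos_of_ne_zero h⟩)
      rw [this]
      simp)]
  apply Finset.sum_congr rfl
  intro x hx
  have hxpos : 0 < ({i : I | X i = x} : Finset I).card := by
    simpa using (Finset.mem_filter.mp hx).2
  obtain ⟨h1, h0⟩ := hstrata x hxpos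
  rw [split x]
  have hn : (({i : I | X i = x} : Finset I).card : ℝ) ≠ 0 := by positivity
  have hn1 : ((({i : I | X i = x ∧ Z i = 1} : Finset I).card : ℝ)) ≠ 0 := by positivity
  have hn0 : ((({i : I | X i = x ∧ Z i = 0} : Finset I).card : ℝ)) ≠ 0 := by positivity
  have hwx : w x ≠ 0 := ne_of_gt (hw x).1
  have hwx1 : 1 - w x ≠ 0 := by have := (hw x).2; linarith
  have hcs : (({i : I | X i = x} : Finset I).card : ℝ)
      = (({i : I | X i = x ∧ Z i = 1} : Finset I).card : ℝ)
        + (({i : I | X i = x ∧ Z i = 0} : Finset I).card : ℝ) := by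
    exact_mod_cast cardsplit x
  rw [hcs]
  field_simp
  ring
end

section
/- Let n ≥ 1 be a natural number, p ∈ (0,1) a real number, and q = 1 − p. Then (1 − q^(n+1)) / (2(n + 1) p) − [ 1/((2n + 1) p) − (1 − q^(2n+2)) / ((2n + 1)(2n + 2) p²) ] ≥ 0. -/
lemma geom_pair_amgm (q : ℝ) (hq : 0 ≤ q) :
    ∀ m : ℕ, (2 * (m : ℝ) + 1) * q ^ m ≤ ∑ i ∈ Finset.range (2 * m + 1), q ^ i := by
  intro m
  induction m with
  | zero => simp
  | succ m ih =>
    have hsplit : ∑ i ∈ Finset.range (2 * (m + 1) + 1), q ^ i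
        = 1 + q ^ (2 * m + 2) + q * ∑ i ∈ Finset.range (2 * m + 1), q ^ i := by
      have h3 : 2 * (m + 1) + 1 = (2 * m + 2) + 1 := by ring
      rw [h3, Finset.sum_range_succ, Finset.sum_range_succ']
      rw [Finset.mul_sum]
      simp [pow_succ, mul_comm]
      ring
    rw [hsplit]
    have hq1 : q * ((2 * (m : ℝ) + 1) * q ^ m) ≤ q * ∑ i ∈ Finset.range (2 * m + 1), q ^ i :=
      mul_le_mul_of_nonneg_left ih hq
    have e1 : q ^ (2 * m + 2) = (q ^ (m + 1)) ^ 2 := by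
      rw [← pow_mul]; ring_nf
    have e2 : q * ((2 * (m:ℝ) + 1) * q ^ m) = (2 * (m:ℝ) + 1) * q ^ (m + 1) := by
      rw [pow_succ]; ring
    rw [e1]
    push_cast
    nlinarith [sq_nonneg (1 - q^(m+1)), hq1, e2]

/-- Closed-form inequality from Appendix 1 of the paper: for `n ≥ 1`, `p ∈ (0,1)`,
and `q = 1 - p`,
`(1 - q^(n+1))/(2(n+1)p) - [1/((2n+1)p) - (1 - q^(2n+2))/((2n+1)(2n+2)p²)] ≥ 0`. -/
theorem collapsed_minus_uncollapsed_nonneg (n : ℕ) (hn : 1 ≤ n) (p q : ℝ)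
    (hp0 : 0 < p) (hp1 : p < 1) (hq : q = 1 - p) :
    (1 - q ^ (n + 1)) / (2 * ((n : ℝ) + 1) * p)
      - (1 / ((2 * (n : ℝ) + 1) * p)
        - (1 - q ^ (2 * n + 2)) / ((2 * (n : ℝ) + 1) * (2 * (n : ℝ) + 2) * p ^ 2))
      ≥ 0 := by
  have hq0 : 0 ≤ q := by rw [hq]; linarith
  set S1 : ℝ := ∑ i ∈ Finset.range (n + 1), q ^ i with hS1
  set S2 : ℝ := ∑ i ∈ Finset.range (2 * n + 2), q ^ i with hS2
  have h1 : 1 - q ^ (n + 1) = p * S1 := by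
    have := geom_sum_mul q (n + 1)
    rw [hq] at *; nlinarith [this]
  have h2 : 1 - q ^ (2 * n + 2) = p * S2 := by
    have := geom_sum_mul q (2 * n + 2)
    rw [hq] at *; nlinarith [this]
  have hS2split : S2 = 1 + q * ∑ i ∈ Finset.range (2 * n + 1), q ^ i := by
    rw [hS2, show 2 * n + 2 = (2 * n + 1) + 1 from rfl, Finset.sum_range_succ',
      Finset.mul_sum]
    simp [pow_succ, mul_comm]
    ring
  have hkey : (2 * (n : ℝ) + 1) * q ^ (n + 1) ≤ q * ∑ i ∈ Finset.range (2 * n + 1), q ^ i := by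
    have := mul_le_mul_of_nonneg_left (geom_pair_amgm q hq0 n) hq0
    calc (2 * (n : ℝ) + 1) * q ^ (n + 1) = q * ((2 * (n : ℝ) + 1) * q ^ n) := by ring
      _ ≤ q * ∑ i ∈ Finset.range (2 * n + 1), q ^ i := this
  have hnum : 0 ≤ (2 * (n : ℝ) + 1) * (p * S1) + S2 - (2 * (n : ℝ) + 2) := by
    rw [← h1, hS2split]
    nlinarith [hkey]
  have hn1 : (0:ℝ) < (n:ℝ) + 1 := by positivity
  have h2n1 : (0:ℝ) < 2 * (n:ℝ) + 1 := by positivity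
  rw [h1, h2]
  have key : (p * S1) / (2 * ((n : ℝ) + 1) * p)
      - (1 / ((2 * (n : ℝ) + 1) * p)
        - (p * S2) / ((2 * (n : ℝ) + 1) * (2 * (n : ℝ) + 2) * p ^ 2))
      = ((2 * (n:ℝ) + 1) * (p * S1) + S2 - (2 * (n:ℝ) + 2))
          / ((2 * (n:ℝ) + 1) * (2 * (n:ℝ) + 2) * p) := by
    field_simp
    ring
  rw [key]
  apply div_nonneg hnum
  positivity
end

section
/- Let n ≥ 1 be a natural number and q a real number with 0 ≤ q ≤ 1. Then (1 − q^(n+1))(q^n + 1) − (2n + 2)(1 − q) q^n ≥ 0. -/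
/-- Key polynomial inequality from Appendix 1 of the paper: for `n ≥ 1` and
`q ∈ [0, 1]`, `(1 - q^(n+1))(q^n + 1) - (2n + 2)(1 - q) q^n ≥ 0`. -/
theorem appendix_polynomial_inequality (n : ℕ) (hn : 1 ≤ n) (q : ℝ)
    (hq0 : 0 ≤ q) (hq1 : q ≤ 1) :
    (1 - q ^ (n + 1)) * (q ^ n + 1) - (2 * (n : ℝ) + 2) * (1 - q) * q ^ n ≥ 0 := by
  set S : ℝ := ∑ i ∈ Finset.range (n + 1), q ^ i with hS
  have hgeom : 1 - q ^ (n + 1) = (1 - q) * S := by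
    have h := geom_sum_mul q (n + 1)
    rw [hS]
    linear_combination h
  have hsum : (2 * (n : ℝ) + 2) * q ^ n ≤ S * (q ^ n + 1) := by
    have hrefl : S = ∑ i ∈ Finset.range (n + 1), q ^ (n - i) := by
      rw [hS, ← Finset.sum_range_reflect]
      apply Finset.sum_congr rfl
      intro i hi
      congr 1
    have hexp : S * (q ^ n + 1)
        = ∑ i ∈ Finset.range (n + 1), (q ^ (n + i) + q ^ (n - i)) := by
      rw [Finset.sum_add_distrib, ← hrefl, hS, Finset.sum_mul, ← Finset.sum_add_distrib]
      apply Finset.sum_congr rfl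
      intro i _
      rw [pow_add]
      ring
    have hterm : ∀ i ∈ Finset.range (n + 1), 2 * q ^ n ≤ q ^ (n + i) + q ^ (n - i) := by
      intro i hi
      have hin : i ≤ n := by
        have := Finset.mem_range.mp hi; omega
      have h1 : n + i = (n - i) + 2 * i := by omega
      have h2 : n = (n - i) + i := by omega
      have hnn : (0:ℝ) ≤ q ^ (n - i) * (q ^ i - 1) ^ 2 :=
        mul_nonneg (pow_nonneg hq0 _) (sq_nonneg _)
      have h3 : q ^ (2 * i) = (q ^ i) ^ 2 := by rw [← pow_mul, mul_comm]
      calc 2 * q ^ n = 2 * (q ^ (n - i) * q ^ i) := by rw [← pow_add, ← h2]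
        _ ≤ q ^ (n - i) * q ^ (2 * i) + q ^ (n - i) := by rw [h3]; nlinarith [hnn]
        _ = q ^ (n + i) + q ^ (n - i) := by rw [h1, pow_add]
    calc (2 * (n : ℝ) + 2) * q ^ n
        = ∑ _i ∈ Finset.range (n + 1), 2 * q ^ n := by
          rw [Finset.sum_const, Finset.card_range]
          push_cast
          ring
      _ ≤ ∑ i ∈ Finset.range (n + 1), (q ^ (n + i) + q ^ (n - i)) :=
          Finset.sum_le_sum hterm
      _ = S * (q ^ n + 1) := hexp.symm
  have hq : 0 ≤ 1 - q := by linarith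
  have : (1 - q ^ (n + 1)) * (q ^ n + 1) - (2 * (n : ℝ) + 2) * (1 - q) * q ^ n
      = (1 - q) * (S * (q ^ n + 1) - (2 * (n : ℝ) + 2) * q ^ n) := by
    rw [hgeom]; ring
  rw [ge_iff_le, this]
  exact mul_nonneg hq (by linarith)
end
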